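/- On the interval (h*₃(k_r), ∞), where h*₃(k_r) = (C₃/6)·(D/k_r + 1/(4π·σ))⁻¹, the function h ↦ h³·ρ³(k_r,h) is strictly decreasing, and for every h in this interval one has h³·ρ³(k_r,h) > k_CK, where k_CK = 4π·σ·D·k_r/(4π·σ·D + k_r). -/

import Mathlib

/-- The constant `C₃ ≈ 1.5164` from the 3D mesoscopic rate expression. -/
noncomputable def C3 : ℝ := 1.5164

/-- `G³(h) = 1/(4π·σ) − C₃/(6h)`. -/
noncomputable def G3 (σ h : ℝ) : ℝ := 1 / (4 * Real.pi * σ) - C3 / (6 * h)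

/-- The 3D mesoscopic association rate `ρ³(k_r,h) = (k_r/h³)·(1+(k_r/D)·G³(h))⁻¹`. -/
noncomputable def rho3 (σ D kr h : ℝ) : ℝ :=
  (kr / h ^ 3) * (1 + (kr / D) * G3 σ h)⁻¹

/-- The 3D critical voxel size `h*₃(k_r) = (C₃/6)·(D/k_r + 1/(4π·σ))⁻¹`. -/
noncomputable def hstar3 (σ D kr : ℝ) : ℝ :=
  (C3 / 6) * (D / kr + 1 / (4 * Real.pi * σ))⁻¹

/-- The Collins–Kimball rate `k_CK = 4π·σ·D·k_r/(4π·σ·D + k_r)`. -/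
noncomputable def kCK (σ D kr : ℝ) : ℝ :=
  4 * Real.pi * σ * D * kr / (4 * Real.pi * σ * D + kr)

/-!
Since `h³·ρ³(k_r,h) = k_r / (1 + (k_r/D)·G³(h))` and `G³` is affine in `1/h`, the product equals
`k_r / (a - b/h)` with `a = 1 + k_r/(4πσD)` and `b = C₃·k_r/(6D)`. The critical size is
`h*₃ = b/a`, exactly where the denominator vanishes, and `k_CK = k_r/a`. For `h > b/a` the
denominator `a - b/h` is positive, strictly increasing in `h` and below `a`.
-/

section ReciprocalShift

variable {a b c h : ℝ}

lemma sub_div_pos_of_div_lt (ha : 0 < a) (hb : 0 ≤ b) (hh : b / a < h) : 0 < a - b / h := by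
  have h_pos : 0 < h := (div_nonneg hb ha.le).trans_lt hh
  rw [sub_pos, div_lt_iff₀ h_pos, mul_comm]
  exact (div_lt_iff₀ ha).mp hh

lemma strictAntiOn_div_sub_div (ha : 0 < a) (hb : 0 < b) (hc : 0 < c) :
    StrictAntiOn (fun h => c / (a - b / h)) (Set.Ioi (b / a)) := by
  intro h₁ hh₁ h₂ _ hlt
  have h₁_pos : 0 < h₁ := (div_pos hb ha).trans hh₁
  have hden : a - b / h₁ < a - b / h₂ :=
    sub_lt_sub_left (div_lt_div_of_pos_left hb h₁_pos hlt) a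
  exact div_lt_div_of_pos_left hc (sub_div_pos_of_div_lt ha hb.le hh₁) hden

lemma div_lt_div_sub_div (ha : 0 < a) (hb : 0 < b) (hc : 0 < c) (hh : b / a < h) :
    c / a < c / (a - b / h) := by
  have h_pos : 0 < h := (div_pos hb ha).trans hh
  exact div_lt_div_of_pos_left hc (sub_div_pos_of_div_lt ha hb.le hh)
    (sub_lt_self a (div_pos hb h_pos))

end ReciprocalShift

section MesoscopicRate

variable {σ D kr h : ℝ}

lemma pow_three_mul_rho3 (hh : h ≠ 0) :
    h ^ 3 * rho3 σ D kr h =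
      kr / (1 + kr / D * (1 / (4 * Real.pi * σ)) - kr / D * (C3 / 6) / h) := by
  rw [rho3, G3, ← mul_assoc, mul_div_cancel₀ kr (pow_ne_zero 3 hh), div_eq_mul_inv]
  ring

lemma hstar3_eq_div (hD : D ≠ 0) (hkr : kr ≠ 0) :
    hstar3 σ D kr = kr / D * (C3 / 6) / (1 + kr / D * (1 / (4 * Real.pi * σ))) := by
  rw [hstar3]
  field_simp

lemma kCK_eq_div (hσ : σ ≠ 0) (hD : D ≠ 0) :
    kCK σ D kr = kr / (1 + kr / D * (1 / (4 * Real.pi * σ))) := by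
  rw [kCK]
  field_simp

end MesoscopicRate

theorem stmt_9 (σ D kr : ℝ) (hσ : 0 < σ) (hD : 0 < D) (hkr : 0 < kr) :
    StrictAntiOn (fun h : ℝ => h ^ 3 * rho3 σ D kr h) (Set.Ioi (hstar3 σ D kr)) ∧
    ∀ h : ℝ, h ∈ Set.Ioi (hstar3 σ D kr) → kCK σ D kr < h ^ 3 * rho3 σ D kr h := by
  rw [hstar3_eq_div hD.ne' hkr.ne', kCK_eq_div hσ.ne' hD.ne']
  set a := 1 + kr / D * (1 / (4 * Real.pi * σ))
  set b := kr / D * (C3 / 6)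
  have ha : 0 < a := by positivity
  have hb : 0 < b := by
    have hC3 : (0 : ℝ) < C3 := by norm_num [C3]
    positivity
  have h_ne : ∀ h ∈ Set.Ioi (b / a), h ≠ 0 := fun h hh => ((div_pos hb ha).trans hh).ne'
  refine ⟨(strictAntiOn_div_sub_div ha hb hkr).congr fun h hh => ?_, fun h hh => ?_⟩
  · exact (pow_three_mul_rho3 (h_ne h hh)).symm
  · rw [pow_three_mul_rho3 (h_ne h hh)]
    exact div_lt_div_sub_div ha hb hkr hh
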